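/- arXiv:2308.09703 — 7 statements merged into one kernel-verified Lean document; each statement's English description precedes it below -/
import Mathlib

section
/- Let G be a chordal graph, let X ⊆ V(G) be a clique, and let L₁, …, L_t be the evaporation sequence of G with exception set X. Then for every i ∈ {1,…,t}, every connected component of the induced subgraph G[L_i] is a clique. -/
/-- A graph is chordal if it contains no induced cycle of length at least 4. -/
def IsChordal {V : Type*} (G : SimpleGraph V) : Prop :=
  ∀ n : ℕ, 4 ≤ n → IsEmpty (SimpleGraph.cycleGraph n ↪g G)

/-- The neighborhood of `v` inside the induced subgraph of `G` on the vertex set `R`. -/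
def nbhdIn {V : Type*} (G : SimpleGraph V) (R : Set V) (v : V) : Set V :=
  {u | u ∈ R ∧ G.Adj u v}

/-- `v` is simplicial in the induced subgraph of `G` on `R`:
its neighborhood there is a clique. -/
def SimplicialIn {V : Type*} (G : SimpleGraph V) (R : Set V) (v : V) : Prop :=
  G.IsClique (nbhdIn G R v)

/-- The set of vertices remaining after `n` steps of the evaporation process of `G` with
exception set `X`: at each step all simplicial vertices of the current induced subgraph that
are not in `X` are removed. -/
def evapR {V : Type*} (G : SimpleGraph V) (X : Set V) : ℕ → Set V
  | 0 => Set.univ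
  | n + 1 =>
      evapR G X n \ {v | v ∈ evapR G X n ∧ v ∉ X ∧ SimplicialIn G (evapR G X n) v}

/-- The `i`-th set `L_i` of the evaporation sequence (for `i ≥ 1`): the vertices removed at
step `i` of the evaporation process. -/
def evapLayer {V : Type*} (G : SimpleGraph V) (X : Set V) (i : ℕ) : Set V :=
  evapR G X (i - 1) \ evapR G X i

/-- The evaporation time of `G` with exception set `X`: the length `t` of the evaporation
sequence, i.e. the least `t` with `evapR G X t = X`. -/
noncomputable def evapTime {V : Type*} (G : SimpleGraph V) (X : Set V) : ℕ :=
  sInf {t | evapR G X t = X}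

/-- The evaporation time of a vertex subset `S`: the largest index `i` such that
`L_i ∩ S ≠ ∅`. -/
noncomputable def evapTimeOf {V : Type*} (G : SimpleGraph V) (X S : Set V) : ℕ :=
  sSup {i | (evapLayer G X i ∩ S).Nonempty}

/-- `C` is a connected component of the induced subgraph of `G` on `S`:
a maximal subset of `S` inducing a connected subgraph. -/
def IsCompOf {V : Type*} (G : SimpleGraph V) (S C : Set V) : Prop :=
  C.Nonempty ∧ C ⊆ S ∧ (G.induce C).Connected ∧
    ∀ D, C ⊆ D → D ⊆ S → (G.induce D).Connected → D = C

/-- The open neighborhood `N(S)` of a set of vertices. -/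
def setNbhd {V : Type*} (G : SimpleGraph V) (S : Set V) : Set V :=
  {v | v ∉ S ∧ ∃ u ∈ S, G.Adj u v}

/-!
Every vertex of `L_i` is simplicial in the graph `G[R]` from which it evaporates. Along a walk
inside a set of such vertices, the two neighbours of any inner vertex are therefore adjacent,
so the walk can be shortcut to a single edge: a connected set of simplicial vertices is a
clique.
-/

theorem SimplicialIn.adj {V : Type*} {G : SimpleGraph V} {R : Set V} {v a c : V}
    (hv : SimplicialIn G R v) (ha : a ∈ R) (hc : c ∈ R) (hav : G.Adj a v) (hcv : G.Adj c v)
    (hac : a ≠ c) : G.Adj a c :=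
  hv ⟨ha, hav⟩ ⟨hc, hcv⟩ hac

namespace SimpleGraph

variable {V : Type*} {G : SimpleGraph V} {R C : Set V}

theorem eq_or_adj_of_walk_induce_of_simplicialIn (hCR : C ⊆ R)
    (hsimp : ∀ v ∈ C, SimplicialIn G R v) {u w : C} (p : (G.induce C).Walk u w) :
    (u : V) = w ∨ G.Adj u w := by
  induction p with
  | nil => exact Or.inl rfl
  | @cons a b c hab _ ih =>
    have hab : G.Adj a b := hab
    rcases ih with hbc | hbc
    · exact Or.inr (hbc ▸ hab)
    · by_cases hac : (a : V) = c
      · exact Or.inl hac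
      · exact Or.inr <| (hsimp b b.2).adj (hCR a.2) (hCR c.2) hab hbc.symm hac

theorem Preconnected.isClique_of_simplicialIn (hconn : (G.induce C).Preconnected)
    (hCR : C ⊆ R) (hsimp : ∀ v ∈ C, SimplicialIn G R v) : G.IsClique C := by
  intro u hu w hw hne
  obtain ⟨p⟩ := hconn ⟨u, hu⟩ ⟨w, hw⟩
  exact (eq_or_adj_of_walk_induce_of_simplicialIn hCR hsimp p).resolve_left hne

end SimpleGraph

theorem evapLayer_subset {V : Type*} (G : SimpleGraph V) (X : Set V) (i : ℕ) :
    evapLayer G X i ⊆ evapR G X (i - 1) :=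
  Set.sdiff_subset

theorem simplicialIn_of_mem_evapLayer {V : Type*} {G : SimpleGraph V} {X : Set V} {i : ℕ}
    {v : V} (hv : v ∈ evapLayer G X i) : SimplicialIn G (evapR G X (i - 1)) v := by
  cases i with
  | zero => simp [evapLayer] at hv
  | succ =>
    obtain ⟨hvR, hvR'⟩ := hv
    by_contra hs
    exact hvR' ⟨hvR, fun hmem => hs hmem.2.2⟩

theorem evapLayer_components_cliques_general {V : Type*} (G : SimpleGraph V) (X : Set V) :
    ∀ i, 1 ≤ i → i ≤ evapTime G X →
      ∀ C, IsCompOf G (evapLayer G X i) C → G.IsClique C := by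
  intro i _ _ C ⟨_, hCL, hconn, _⟩
  exact hconn.preconnected.isClique_of_simplicialIn (hCL.trans (evapLayer_subset G X i))
    fun v hv => simplicialIn_of_mem_evapLayer (hCL hv)

/-- If `G` is a chordal graph, `X ⊆ V(G)` a clique, and `L₁, …, L_t` the
evaporation sequence of `G` with exception set `X`, then for every `i ∈ {1,…,t}`, every
connected component of the induced subgraph `G[L_i]` is a clique. -/
theorem evapLayer_components_cliques {V : Type*} [Fintype V] (G : SimpleGraph V) (X : Set V)
    (hch : IsChordal G) (hX : G.IsClique X) :
    ∀ i, 1 ≤ i → i ≤ evapTime G X →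
      ∀ C, IsCompOf G (evapLayer G X i) C → G.IsClique C :=
  evapLayer_components_cliques_general G X
end

section
/- Let G be a chordal graph, let X ⊆ V(G) be a clique, and let L₁, …, L_t be the evaporation sequence of G with exception set X, with t ≥ 1. If the graph G − X (the induced subgraph on V(G)∖X) is connected, then L_t is a clique. -/
/-!
Removing from a vertex set `R` any set of vertices that are simplicial in `R` does not
disconnect the rest: on a shortest walk inside `R`, a simplicial interior vertex could be
bypassed through the edge between its two neighbours. Applied at every step of the
evaporation, a walk in `G - X` between two vertices of `L_t` descends to a walk inside
`L_t = evapR G X (t - 1) \ X`. All vertices of `L_t` are simplicial in `evapR G X (t - 1)`,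
so the same bypassing argument, now applied to the interior vertices of that walk, shrinks it
to a single edge.
-/

section

open SimpleGraph

variable {V : Type*} {G : SimpleGraph V}

theorem SimplicialIn.mono {R R' : Set V} {v : V} (h : R' ⊆ R) (hv : SimplicialIn G R v) :
    SimplicialIn G R' v :=
  hv.subset fun _ hu => And.intro (h hu.1) hu.2

theorem SimpleGraph.Preconnected.exists_walk_of_induce {s : Set V}
    (h : (G.induce s).Preconnected) {a b : V} (ha : a ∈ s) (hb : b ∈ s) :
    ∃ p : G.Walk a b, ∀ x ∈ p.support, x ∈ s := by
  obtain ⟨p⟩ := h ⟨a, ha⟩ ⟨b, hb⟩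
  refine ⟨p.map (Embedding.induce s).toHom, fun x hx => ?_⟩
  obtain ⟨y, -, rfl⟩ := List.mem_map.1 ((Walk.support_map _ p) ▸ hx)
  exact y.2

theorem exists_shorter_walk_of_simplicialIn {R : Set V} {v : V} (hv : SimplicialIn G R v) :
    ∀ {a b : V} (p : G.Walk a b), (∀ x ∈ p.support, x ∈ R) → v ∈ p.support →
      a ≠ v → b ≠ v →
      ∃ q : G.Walk a b, (∀ x ∈ q.support, x ∈ R) ∧ q.length < p.length
  | _, _, .nil, _, hvp, ha, _ => (ha (List.mem_singleton.1 hvp).symm).elim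
  | a, _, .cons (v := x) hax p, hpR, hvp, ha, hb => by
    simp only [Walk.support_cons, List.forall_mem_cons] at hpR
    by_cases hxv : x = v
    · subst hxv
      cases p with
      | nil => exact (hb rfl).elim
      | @cons _ y _ hxy p =>
        simp only [Walk.support_cons, List.forall_mem_cons] at hpR
        by_cases hay : a = y
        · subst hay
          exact ⟨p, hpR.2.2, by simp⟩
        · have hadj : G.Adj a y :=
            hv ⟨hpR.1, hax⟩ ⟨hpR.2.2 y p.start_mem_support, hxy.symm⟩ hay
          exact ⟨.cons hadj p, by simpa using ⟨hpR.1, hpR.2.2⟩, by simp⟩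
    · have hvp' : v ∈ p.support := by
        simpa [Ne.symm ha] using hvp
      obtain ⟨q, hqR, hq⟩ := exists_shorter_walk_of_simplicialIn hv p hpR.2 hvp' hxv hb
      exact ⟨.cons hax q, by simpa using ⟨hpR.1, hqR⟩, by simpa⟩

theorem exists_walk_diff_of_simplicialIn {R D : Set V} (hD : ∀ v ∈ D, SimplicialIn G R v)
    {a b : V} (ha : a ∉ D) (hb : b ∉ D) (p : G.Walk a b) (hp : ∀ x ∈ p.support, x ∈ R) :
    ∃ q : G.Walk a b, ∀ x ∈ q.support, x ∈ R \ D := by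
  induction hn : p.length using Nat.strong_induction_on generalizing p with
  | _ n ih =>
    by_cases hpD : ∃ v ∈ D, v ∈ p.support
    · obtain ⟨v, hvD, hvp⟩ := hpD
      obtain ⟨q, hqR, hq⟩ := exists_shorter_walk_of_simplicialIn (hD v hvD) p hp hvp
        (fun h => ha (h ▸ hvD)) (fun h => hb (h ▸ hvD))
      exact ih _ (hn ▸ hq) q hqR rfl
    · push Not at hpD
      exact ⟨p, fun x hx => ⟨hp x hx, fun hxD => hpD x hxD hx⟩⟩

theorem adj_of_walk_of_simplicialIn {R : Set V} {a b : V} (hab : a ≠ b) (p : G.Walk a b)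
    (hp : ∀ x ∈ p.support, x ∈ R) (hR : ∀ v ∈ R, SimplicialIn G R v) : G.Adj a b := by
  obtain ⟨q, hq⟩ := exists_walk_diff_of_simplicialIn (D := R \ {a, b})
    (fun v hv => hR v hv.1) (fun h => h.2 (by simp)) (fun h => h.2 (by simp)) p hp
  cases q with
  | nil => exact (hab rfl).elim
  | @cons _ x _ hax q =>
    have hx : x = a ∨ x = b := by
      by_contra h
      exact (hq x (by simp)).2 ⟨(hq x (by simp)).1, h⟩
    exact hx.resolve_left (G.ne_of_adj hax).symm ▸ hax

theorem simplicialIn_of_mem_evapR_diff_succ {X : Set V} {n : ℕ} {v : V}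
    (hv : v ∈ evapR G X n \ evapR G X (n + 1)) : SimplicialIn G (evapR G X n) v := by
  by_contra h
  exact hv.2 ⟨hv.1, fun hv' => h hv'.2.2⟩

theorem exists_walk_evapR_diff {X : Set V} {a b : V} (p : G.Walk a b)
    (hp : ∀ x ∈ p.support, x ∉ X) :
    ∀ n, a ∈ evapR G X n → b ∈ evapR G X n →
      ∃ q : G.Walk a b, ∀ x ∈ q.support, x ∈ evapR G X n \ X
  | 0, _, _ => ⟨p, fun x hx => ⟨Set.mem_univ x, hp x hx⟩⟩
  | n + 1, ha, hb => by
    obtain ⟨q, hq⟩ := exists_walk_evapR_diff p hp n (Set.sdiff_subset ha) (Set.sdiff_subset hb)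
    obtain ⟨r, hr⟩ := exists_walk_diff_of_simplicialIn
      (fun v hv => (simplicialIn_of_mem_evapR_diff_succ hv).mono Set.sdiff_subset)
      (fun h => h.2 ha) (fun h => h.2 hb) q hq
    refine ⟨r, fun x hx => ⟨?_, (hr x hx).1.2⟩⟩
    by_contra h
    exact (hr x hx).2 ⟨(hr x hx).1.1, h⟩

theorem evapR_evapTime_of_eq_succ {X : Set V} {s : ℕ} (h : evapTime G X = s + 1) :
    evapR G X (s + 1) = X :=
  h ▸ Nat.sInf_mem (Nat.nonempty_of_sInf_eq_succ h)

end

theorem evapLayer_last_clique_general {V : Type*} (G : SimpleGraph V) (X : Set V)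
    (hconn : (G.induce Xᶜ).Connected) :
    G.IsClique (evapLayer G X (evapTime G X)) := by
  cases ht : evapTime G X with
  | zero => simp [evapLayer]
  | succ s =>
    have hX := evapR_evapTime_of_eq_succ ht
    have hlayer : evapLayer G X (s + 1) = evapR G X s \ X := by
      rw [evapLayer, hX, Nat.add_sub_cancel]
    rw [hlayer]
    intro a ha b hb hab
    obtain ⟨p, hp⟩ := hconn.preconnected.exists_walk_of_induce ha.2 hb.2
    obtain ⟨q, hq⟩ := exists_walk_evapR_diff p hp s ha.1 hb.1
    refine adj_of_walk_of_simplicialIn hab q hq fun v hv => ?_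
    exact (simplicialIn_of_mem_evapR_diff_succ (X := X) (by rwa [hX])).mono Set.sdiff_subset

/-- If `G` is a chordal graph, `X ⊆ V(G)` a clique, `L₁, …, L_t` the
evaporation sequence of `G` with exception set `X` with `t ≥ 1`, and `G − X` is connected,
then `L_t` is a clique. -/
theorem evapLayer_last_clique {V : Type*} [Fintype V] (G : SimpleGraph V) (X : Set V)
    (hch : IsChordal G) (hX : G.IsClique X) (ht : 1 ≤ evapTime G X)
    (hconn : (G.induce Xᶜ).Connected) :
    G.IsClique (evapLayer G X (evapTime G X)) :=
  evapLayer_last_clique_general G X hconn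
end

section
/- Let G be a chordal graph, let X ⊆ V(G) be a clique, and let L₁, …, L_t be the evaporation sequence of G with exception set X, with t ≥ 1. Let C = V(G)∖X. If G − X is connected, then N(C) = N(L_t) ∩ X, where N(S) denotes the open neighborhood of a vertex set S in G. -/
/-!
Fix `x ∈ X` with a neighbour outside `X`, and let `R n` be the vertex set left after `n`
evaporation steps. The graph induced on `{x} ∪ (R n ∖ X)` stays connected for every `n`:
deleting a vertex whose neighbourhood is a clique never disconnects a graph, since a walk through
it can jump from its predecessor directly to its successor. At `n = t - 1` this set is
`{x} ∪ L_t` with `L_t` nonempty, so `x` has a neighbour in `L_t`.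
-/

open SimpleGraph

section

variable {V : Type*} {G : SimpleGraph V}

/-- Induction along the walk: `c` is a surviving stand-in for the current vertex `a`, namely `a`
itself or, if `a` was deleted, one of its neighbours. -/
theorem SimpleGraph.Walk.reachable_induce_of_simplicialIn {S T : Set V} (hTS : T ⊆ S)
    (hsimp : ∀ v ∈ S \ T, SimplicialIn G S v) {a b : S} (p : (G.induce S).Walk a b)
    (hb : (b : V) ∈ T) {c : V} (hc : c ∈ T) (hca : c = a ∨ (a : V) ∉ T ∧ G.Adj c a) :
    (G.induce T).Reachable ⟨c, hc⟩ ⟨b, hb⟩ := by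
  induction p generalizing c with
  | nil =>
    obtain rfl | ⟨ha, -⟩ := hca
    · rfl
    · exact absurd hb ha
  | @cons a a' b haa' q ih =>
    have hca' : c = a' ∨ G.Adj c a' := by
      obtain rfl | ⟨ha, hca⟩ := hca
      · exact Or.inr haa'
      · by_cases h : c = a'
        · exact Or.inl h
        · exact Or.inr (hsimp a ⟨a.2, ha⟩ ⟨hTS hc, hca⟩ ⟨a'.2, haa'.symm⟩ h)
    by_cases ha' : (a' : V) ∈ T
    · refine Reachable.trans ?_ (ih hb ha' (Or.inl rfl))
      obtain rfl | h := hca'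
      · rfl
      · exact Adj.reachable h
    · exact ih hb hc (hca'.imp_right fun h => ⟨ha', h⟩)

theorem SimpleGraph.Preconnected.induce_of_simplicialIn {S T : Set V}
    (hS : (G.induce S).Preconnected) (hTS : T ⊆ S) (hsimp : ∀ v ∈ S \ T, SimplicialIn G S v) :
    (G.induce T).Preconnected := by
  rintro ⟨u, hu⟩ ⟨v, hv⟩
  obtain ⟨p⟩ := hS ⟨u, hTS hu⟩ ⟨v, hTS hv⟩
  exact p.reachable_induce_of_simplicialIn hTS hsimp hv hu (Or.inl rfl)

theorem SimpleGraph.Preconnected.exists_adj_of_induce_insert {x : V} {A : Set V}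
    (h : (G.induce (insert x A)).Preconnected) (hA : A.Nonempty) (hxA : x ∉ A) :
    ∃ a ∈ A, G.Adj x a := by
  obtain ⟨w, hwA⟩ := hA
  obtain ⟨p⟩ := h ⟨x, Set.mem_insert x A⟩ ⟨w, Set.mem_insert_of_mem x hwA⟩
  obtain ⟨d, -, hd₁, hd₂⟩ := p.exists_boundary_dart {⟨x, Set.mem_insert x A⟩} rfl
    (by simpa [Subtype.ext_iff] using ne_of_mem_of_not_mem hwA hxA)
  rw [Set.mem_singleton_iff] at hd₁ hd₂
  refine ⟨d.snd, (d.snd.2).resolve_left (fun h => hd₂ (Subtype.ext h)), ?_⟩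
  simpa [hd₁] using d.adj

theorem SimplicialIn.subset {S R : Set V} {v : V} (hSR : S ⊆ R) (h : SimplicialIn G R v) :
    SimplicialIn G S v :=
  IsClique.subset (s := nbhdIn G R v) (fun _ hu => ⟨hSR hu.1, hu.2⟩) h

section Evaporation

variable (G) (X : Set V)

theorem subset_evapR (n : ℕ) : X ⊆ evapR G X n := by
  induction n with
  | zero => exact Set.subset_univ X
  | succ n ih => exact fun v hv => ⟨ih hv, fun h => h.2.1 hv⟩

theorem evapR_succ_subset (n : ℕ) : evapR G X (n + 1) ⊆ evapR G X n :=
  Set.sdiff_subset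

variable {G X}

theorem simplicialIn_evapR_of_notMem_succ {n : ℕ} {v : V} (hv : v ∈ evapR G X n)
    (hv' : v ∉ evapR G X (n + 1)) : SimplicialIn G (evapR G X n) v := by
  by_contra h
  exact hv' ⟨hv, fun hmem => h hmem.2.2⟩

theorem evapR_evapTime (ht : 1 ≤ evapTime G X) : evapR G X (evapTime G X) = X :=
  Nat.sInf_mem (Nat.nonempty_of_pos_sInf ht)

theorem evapLayer_evapTime (ht : 1 ≤ evapTime G X) :
    evapLayer G X (evapTime G X) = evapR G X (evapTime G X - 1) \ X := by
  rw [evapLayer, evapR_evapTime ht]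

theorem evapLayer_evapTime_nonempty (ht : 1 ≤ evapTime G X) :
    (evapLayer G X (evapTime G X)).Nonempty := by
  rw [evapLayer_evapTime ht, Set.sdiff_nonempty]
  intro hsub
  exact Nat.notMem_of_lt_sInf (Nat.sub_lt ht one_pos)
    (hsub.antisymm (subset_evapR G X _))

theorem preconnected_induce_insert_evapR_diff {x : V} (hx : x ∈ X)
    (h₀ : (G.induce (insert x Xᶜ)).Preconnected) (n : ℕ) :
    (G.induce (insert x (evapR G X n \ X))).Preconnected := by
  induction n with
  | zero => rwa [evapR, ← Set.compl_eq_univ_sdiff]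
  | succ n ih =>
    refine ih.induce_of_simplicialIn
      (Set.insert_subset_insert (Set.sdiff_subset_sdiff_left (evapR_succ_subset G X n))) ?_
    rintro v ⟨rfl | ⟨hvR, hvX⟩, hvT⟩
    · exact absurd (Set.mem_insert v _) hvT
    · exact (simplicialIn_evapR_of_notMem_succ hvR fun h => hvT (.inr ⟨h, hvX⟩)).subset
        (Set.insert_subset (subset_evapR G X n hx) Set.sdiff_subset)

end Evaporation

end

theorem setNbhd_compl_eq_general {V : Type*} (G : SimpleGraph V) (X : Set V)
    (ht : 1 ≤ evapTime G X)
    (hconn : (G.induce Xᶜ).Connected) :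
    setNbhd G Xᶜ = setNbhd G (evapLayer G X (evapTime G X)) ∩ X := by
  ext x
  constructor
  · rintro ⟨hx, u, hu, hux⟩
    rw [Set.notMem_compl_iff] at hx
    have h₀ : (G.induce (insert x Xᶜ)).Preconnected := by
      rw [← Set.singleton_union]
      exact (connected_induce_union (s := {x}) Preconnected.of_subsingleton hconn.preconnected
        (Set.mem_singleton x) hu hux.symm).preconnected
    have hlast := preconnected_induce_insert_evapR_diff hx h₀ (evapTime G X - 1)
    rw [← evapLayer_evapTime ht] at hlast
    have hxL : x ∉ evapLayer G X (evapTime G X) := fun h => h.2 (subset_evapR G X _ hx)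
    obtain ⟨a, ha, hxa⟩ :=
      hlast.exists_adj_of_induce_insert (evapLayer_evapTime_nonempty ht) hxL
    exact ⟨⟨hxL, a, ha, hxa.symm⟩, hx⟩
  · rintro ⟨⟨-, u, hu, hux⟩, hx⟩
    rw [evapLayer_evapTime ht] at hu
    exact ⟨not_not_intro hx, u, hu.2, hux⟩

/-- Let `G` be chordal, `X` a clique, `L₁, …, L_t` the evaporation sequence
of `G` with exception set `X`, with `t ≥ 1`, and let `C = V(G) ∖ X`. If `G − X` is connected,
then `N(C) = N(L_t) ∩ X`. -/
theorem setNbhd_compl_eq {V : Type*} [Fintype V] (G : SimpleGraph V) (X : Set V)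
    (hch : IsChordal G) (hX : G.IsClique X) (ht : 1 ≤ evapTime G X)
    (hconn : (G.induce Xᶜ).Connected) :
    setNbhd G Xᶜ = setNbhd G (evapLayer G X (evapTime G X)) ∩ X :=
  setNbhd_compl_eq_general G X ht hconn
end

section
/- The questioning set Q of any split graph G is either a clique or an independent set. -/
/-!
Suppose `Q` contains an edge `uv`. If `w ∈ Q` is another vertex not adjacent to `u`, take a split
partition with `v` independent and one with `w` in the clique. The first puts `u` in the clique,
hence `w` in the independent part; the second puts `u` in the independent part, hence `v` in the
clique. Then `v, w` lie together in a clique and together in an independent set, which is absurd.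
So every vertex of `Q` is adjacent to both ends of every edge of `Q`, and `Q` is a clique.
-/

/-- A set of vertices is independent if no two of its members are adjacent. -/
def IsIndep {V : Type*} (G : SimpleGraph V) (s : Set V) : Prop :=
  s.Pairwise fun u v => ¬ G.Adj u v

/-- `(C, I)` is a split partition of `G`: `C` and `I` are disjoint, cover all vertices,
`C` is a clique and `I` is an independent set (empty parts are allowed). -/
def IsSplitPartition {V : Type*} (G : SimpleGraph V) (C I : Set V) : Prop :=
  Disjoint C I ∧ C ∪ I = Set.univ ∧ G.IsClique C ∧ IsIndep G I

/-- A split graph: the vertex set can be partitioned into a clique and an independent set. -/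
def IsSplit {V : Type*} (G : SimpleGraph V) : Prop :=
  ∃ C I : Set V, IsSplitPartition G C I

/-- The always-clique set: vertices belonging to the clique part of every split partition. -/
def alwaysClique {V : Type*} (G : SimpleGraph V) : Set V :=
  {v | ∀ C I : Set V, IsSplitPartition G C I → v ∈ C}

/-- The always-independent set: vertices belonging to the independent part of every
split partition. -/
def alwaysIndep {V : Type*} (G : SimpleGraph V) : Set V :=
  {v | ∀ C I : Set V, IsSplitPartition G C I → v ∈ I}

/-- The questioning set: vertices placed in the clique part by some split partition and
in the independent part by some (other) split partition. -/
def questioning {V : Type*} (G : SimpleGraph V) : Set V :=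
  {v | (∃ C I : Set V, IsSplitPartition G C I ∧ v ∈ C) ∧
       (∃ C I : Set V, IsSplitPartition G C I ∧ v ∈ I)}

namespace IsSplitPartition

variable {V : Type*} {G : SimpleGraph V} {C I : Set V}

lemma mem_clique_of_notMem_indep (hP : IsSplitPartition G C I) {v : V} (hv : v ∉ I) : v ∈ C :=
  (hP.2.1 ▸ Set.mem_univ v : v ∈ C ∪ I).resolve_right hv

lemma mem_indep_of_notMem_clique (hP : IsSplitPartition G C I) {v : V} (hv : v ∉ C) : v ∈ I :=
  (hP.2.1 ▸ Set.mem_univ v : v ∈ C ∪ I).resolve_left hv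

lemma mem_clique_of_adj_of_mem_indep (hP : IsSplitPartition G C I) {u v : V}
    (huv : G.Adj u v) (hv : v ∈ I) : u ∈ C :=
  hP.mem_clique_of_notMem_indep fun hu => hP.2.2.2 hu hv huv.ne huv

lemma mem_indep_of_not_adj_of_mem_clique (hP : IsSplitPartition G C I) {u w : V}
    (hwu : w ≠ u) (huw : ¬G.Adj u w) (hu : u ∈ C) : w ∈ I :=
  hP.mem_indep_of_notMem_clique fun hw => huw (hP.2.2.1 hu hw hwu.symm)

end IsSplitPartition

lemma eq_of_mem_isClique_of_mem_isIndep {V : Type*} {G : SimpleGraph V} {s t : Set V}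
    (hs : G.IsClique s) (ht : IsIndep G t) {v w : V} (hvs : v ∈ s) (hws : w ∈ s)
    (hvt : v ∈ t) (hwt : w ∈ t) : v = w :=
  by_contra fun h => ht hvt hwt h (hs hvs hws h)

lemma adj_of_adj_of_exists_split {V : Type*} {G : SimpleGraph V} {u v w : V}
    (huv : G.Adj u v) (hv : ∃ C I : Set V, IsSplitPartition G C I ∧ v ∈ I)
    (hw : ∃ C I : Set V, IsSplitPartition G C I ∧ w ∈ C) (hwu : w ≠ u) (hwv : w ≠ v) :
    G.Adj u w := by
  by_contra huw
  obtain ⟨Cv, Iv, hPv, hvIv⟩ := hv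
  obtain ⟨Cw, Iw, hPw, hwCw⟩ := hw
  have hwIv : w ∈ Iv :=
    hPv.mem_indep_of_not_adj_of_mem_clique hwu huw (hPv.mem_clique_of_adj_of_mem_indep huv hvIv)
  have huIw : u ∈ Iw :=
    hPw.mem_indep_of_not_adj_of_mem_clique hwu.symm (fun h => huw h.symm) hwCw
  have hvCw : v ∈ Cw := hPw.mem_clique_of_adj_of_mem_indep huv.symm huIw
  exact hwv (eq_of_mem_isClique_of_mem_isIndep hPw.2.2.1 hPv.2.2.2 hwCw hvCw hwIv hvIv)

lemma adj_of_adj_of_mem_questioning {V : Type*} {G : SimpleGraph V} {u v w : V}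
    (huv : G.Adj u v) (hv : v ∈ questioning G) (hw : w ∈ questioning G) (hwu : w ≠ u) :
    G.Adj u w := by
  by_cases hwv : w = v
  · exact hwv ▸ huv
  · exact adj_of_adj_of_exists_split huv hv.2 hw.1 hwu hwv

theorem questioning_clique_or_indep_general {V : Type*} (G : SimpleGraph V) :
    G.IsClique (questioning G) ∨ IsIndep G (questioning G) := by
  by_cases hQ : IsIndep G (questioning G)
  · exact Or.inr hQ
  obtain ⟨u, huQ, v, hvQ, -, huv⟩ :
      ∃ u ∈ questioning G, ∃ v ∈ questioning G, u ≠ v ∧ G.Adj u v := by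
    simpa [IsIndep, Set.Pairwise] using hQ
  refine Or.inl fun x hx y hy hxy => ?_
  by_cases hxu : x = u
  · subst hxu
    exact adj_of_adj_of_mem_questioning huv hvQ hy hxy.symm
  · have hux : G.Adj u x := adj_of_adj_of_mem_questioning huv hvQ hx hxu
    exact adj_of_adj_of_mem_questioning hux.symm huQ hy hxy.symm

/-- The questioning set `Q` of any split graph `G` is either a clique or
an independent set. -/
theorem questioning_clique_or_indep {V : Type*} [Fintype V] (G : SimpleGraph V)
    (hG : IsSplit G) :
    G.IsClique (questioning G) ∨ IsIndep G (questioning G) :=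
  questioning_clique_or_indep_general G
end

section
/- Let G be a split graph with always-clique set C, always-independent set I, and questioning set Q. If Q is a clique, then every vertex in C has a neighbor in I. If Q is an independent set, then every vertex in I has a non-neighbor in C. -/
open SimpleGraph

section

variable {V : Type*} {G : SimpleGraph V} {C I s : Set V} {v : V}

lemma isClique_compl_iff : Gᶜ.IsClique s ↔ IsIndep G s := by
  simp only [IsClique, IsIndep, Set.Pairwise, compl_adj]
  exact forall₅_congr fun _ _ _ _ hne => and_iff_right hne

lemma isIndep_compl_iff : IsIndep Gᶜ s ↔ G.IsClique s := by
  simp only [IsClique, IsIndep, Set.Pairwise, compl_adj, not_and, not_not]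
  exact forall₅_congr fun _ _ _ _ hne => imp_iff_right hne

lemma isSplitPartition_compl_iff : IsSplitPartition Gᶜ C I ↔ IsSplitPartition G I C := by
  simp only [IsSplitPartition, isClique_compl_iff, isIndep_compl_iff, disjoint_comm,
    Set.union_comm C I]
  tauto

lemma IsSplit.compl (hG : IsSplit G) : IsSplit Gᶜ :=
  let ⟨C, I, h⟩ := hG
  ⟨I, C, isSplitPartition_compl_iff.2 h⟩

lemma alwaysClique_compl : alwaysClique Gᶜ = alwaysIndep G := by
  ext v
  simp only [alwaysClique, alwaysIndep, Set.mem_ofPred_eq, isSplitPartition_compl_iff]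
  exact ⟨fun h C I hP => h I C hP, fun h C I hP => h I C hP⟩

lemma alwaysIndep_compl : alwaysIndep Gᶜ = alwaysClique G := by
  simpa using (alwaysClique_compl (G := Gᶜ)).symm

lemma questioning_compl : questioning Gᶜ = questioning G := by
  ext v
  simp only [questioning, Set.mem_ofPred_eq, isSplitPartition_compl_iff]
  constructor <;> rintro ⟨⟨C, I, hP, hC⟩, ⟨C', I', hP', hI'⟩⟩ <;>
    exact ⟨⟨I', C', hP', hI'⟩, ⟨I, C, hP, hC⟩⟩

lemma IsSplitPartition.mem_or_mem (h : IsSplitPartition G C I) (v : V) : v ∈ C ∨ v ∈ I :=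
  (h.2.1.symm ▸ Set.mem_univ v : v ∈ C ∪ I)

lemma IsSplitPartition.diff_singleton_insert (h : IsSplitPartition G C I)
    (hv : ∀ u ∈ I, ¬ G.Adj v u) : IsSplitPartition G (C \ {v}) (insert v I) := by
  obtain ⟨hdisj, hcover, hC, hI⟩ := h
  refine ⟨?_, ?_, hC.subset Set.sdiff_subset,
    hI.insert fun u hu _ => ⟨hv u hu, fun hadj => hv u hu hadj.symm⟩⟩
  · exact Set.disjoint_insert_right.2 ⟨fun hv' => hv'.2 rfl, hdisj.mono_left Set.sdiff_subset⟩
  · rw [Set.eq_univ_iff_forall] at hcover ⊢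
    intro u
    by_cases huv : u = v
    · exact Or.inr (Or.inl huv)
    · rcases hcover u with hu | hu
      exacts [Or.inl ⟨hu, huv⟩, Or.inr (Or.inr hu)]

lemma mem_alwaysClique_union_questioning_of_notMem_alwaysIndep (hv : v ∉ alwaysIndep G) :
    v ∈ alwaysClique G ∪ questioning G := by
  simp only [alwaysIndep, Set.mem_ofPred_eq, not_forall] at hv
  obtain ⟨C, I, hP, hvI⟩ := hv
  have hvC : v ∈ C := (hP.mem_or_mem v).resolve_right hvI
  by_cases hK : v ∈ alwaysClique G
  · exact Or.inl hK
  · simp only [alwaysClique, Set.mem_ofPred_eq, not_forall] at hK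
    obtain ⟨C', I', hP', hvC'⟩ := hK
    exact Or.inr ⟨⟨C, I, hP, hvC⟩, ⟨C', I', hP', (hP'.mem_or_mem v).resolve_left hvC'⟩⟩

lemma exists_isSplitPartition_mem_left (hG : IsSplit G)
    (hv : v ∈ alwaysClique G ∪ questioning G) :
    ∃ C I : Set V, IsSplitPartition G C I ∧ v ∈ C := by
  obtain ⟨C, I, hP⟩ := hG
  rcases hv with hK | hQ
  exacts [⟨C, I, hP, hK C I hP⟩, hQ.1]

lemma disjoint_alwaysClique_union_questioning_alwaysIndep (hG : IsSplit G) :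
    Disjoint (alwaysClique G ∪ questioning G) (alwaysIndep G) := by
  refine Set.disjoint_left.2 fun v hv hA => ?_
  obtain ⟨C, I, hP, hvC⟩ := exists_isSplitPartition_mem_left hG hv
  exact Set.disjoint_left.1 hP.1 hvC (hA C I hP)

lemma isIndep_alwaysIndep (hG : IsSplit G) : IsIndep G (alwaysIndep G) := by
  obtain ⟨C, I, hP⟩ := hG
  exact hP.2.2.2.mono fun v hv => hv C I hP

lemma isClique_alwaysClique_union_questioning (hG : IsSplit G)
    (hQ : G.IsClique (questioning G)) : G.IsClique (alwaysClique G ∪ questioning G) := by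
  have adj_of_mem_alwaysClique : ∀ a ∈ alwaysClique G, ∀ b ∈ alwaysClique G ∪ questioning G,
      a ≠ b → G.Adj a b := by
    intro a ha b hb hne
    obtain ⟨C, I, hP, hbC⟩ := exists_isSplitPartition_mem_left hG hb
    exact hP.2.2.1 (ha C I hP) hbC hne
  rintro a (ha | ha) b hb hne
  · exact adj_of_mem_alwaysClique a ha b hb hne
  · rcases hb with hb | hb
    · exact (adj_of_mem_alwaysClique b hb a (Or.inr ha) hne.symm).symm
    · exact hQ ha hb hne

lemma isSplitPartition_alwaysClique_union_questioning (hG : IsSplit G)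
    (hQ : G.IsClique (questioning G)) :
    IsSplitPartition G (alwaysClique G ∪ questioning G) (alwaysIndep G) := by
  refine ⟨disjoint_alwaysClique_union_questioning_alwaysIndep hG, ?_,
    isClique_alwaysClique_union_questioning hG hQ, isIndep_alwaysIndep hG⟩
  refine Set.eq_univ_iff_forall.2 fun v => ?_
  by_cases hA : v ∈ alwaysIndep G
  exacts [Or.inr hA, Or.inl (mem_alwaysClique_union_questioning_of_notMem_alwaysIndep hA)]

lemma exists_adj_alwaysIndep_of_isClique_questioning (hG : IsSplit G)
    (hQ : G.IsClique (questioning G)) (hv : v ∈ alwaysClique G) :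
    ∃ u ∈ alwaysIndep G, G.Adj v u := by
  by_contra! h
  exact (hv _ _ ((isSplitPartition_alwaysClique_union_questioning hG hQ).diff_singleton_insert
    h)).2 rfl

end

theorem neighbor_exists_general {V : Type*} (G : SimpleGraph V) (hG : IsSplit G) :
    (G.IsClique (questioning G) →
      ∀ v ∈ alwaysClique G, ∃ u ∈ alwaysIndep G, G.Adj v u) ∧
    (IsIndep G (questioning G) →
      ∀ v ∈ alwaysIndep G, ∃ u ∈ alwaysClique G, ¬ G.Adj v u) := by
  refine ⟨fun hQ v hv => exists_adj_alwaysIndep_of_isClique_questioning hG hQ hv,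
    fun hQ v hv => ?_⟩
  rw [← isClique_compl_iff, ← questioning_compl] at hQ
  rw [← alwaysClique_compl] at hv
  obtain ⟨u, hu, hadj⟩ := exists_adj_alwaysIndep_of_isClique_questioning hG.compl hQ hv
  rw [alwaysIndep_compl] at hu
  exact ⟨u, hu, ((G.compl_adj v u).1 hadj).2⟩

/-- In a split graph `G` with always-clique set `C`, always-independent
set `I`, and questioning set `Q`: if `Q` is a clique, every vertex of `C` has a neighbor in
`I`; if `Q` is an independent set, every vertex of `I` has a non-neighbor in `C`. -/
theorem neighbor_exists {V : Type*} [Fintype V] (G : SimpleGraph V) (hG : IsSplit G) :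
    (G.IsClique (questioning G) →
      ∀ v ∈ alwaysClique G, ∃ u ∈ alwaysIndep G, G.Adj v u) ∧
    (IsIndep G (questioning G) →
      ∀ v ∈ alwaysIndep G, ∃ u ∈ alwaysClique G, ¬ G.Adj v u) :=
  neighbor_exists_general G hG
end

section
/- Suppose G is a graph and {Ĉ, Î, Q̂} is a partition of V(G) (parts may be empty) with the following properties: (1) Ĉ is a clique and Î is an independent set; (2) |Q̂| ≤ 1; (3) every vertex in Q̂ is adjacent to every vertex in Ĉ and is non-adjacent to every vertex in Î; (4) every vertex in Ĉ has a neighbor in Î, and every vertex in Î has a non-neighbor in Ĉ. Then G is a split graph, and moreover Ĉ is the always-clique set of G, Î is the always-independent set of G, and Q̂ is the questioning set of G. -/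
section

variable {V : Type*} {G : SimpleGraph V} {C I : Set V} {u v : V}

namespace IsSplitPartition

theorem mem_or_mem_s17 (h : IsSplitPartition G C I) (v : V) : v ∈ C ∨ v ∈ I := by
  simpa only [← Set.mem_union, h.2.1] using Set.mem_univ v

theorem notMem_left (h : IsSplitPartition G C I) (hv : v ∈ I) : v ∉ C :=
  fun hvC => h.1.ne_of_mem hvC hv rfl

theorem mem_left_of_adj (h : IsSplitPartition G C I) (hv : v ∈ I) (huv : G.Adj v u) : u ∈ C :=
  (h.mem_or_mem_s17 u).resolve_right fun hu => h.2.2.2 hv hu huv.ne huv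

theorem mem_right_of_not_adj (h : IsSplitPartition G C I) (hv : v ∈ C) (hne : v ≠ u)
    (huv : ¬ G.Adj v u) : u ∈ I :=
  (h.mem_or_mem_s17 u).resolve_left fun hu => huv (h.2.2.1 hv hu hne)

end IsSplitPartition

theorem isSplitPartition_union_left {Q : Set V} (hCI : Disjoint C I) (hIQ : Disjoint I Q)
    (hcover : C ∪ I ∪ Q = Set.univ) (hC : G.IsClique C) (hI : IsIndep G I)
    (hQ : Q.Subsingleton) (hQC : ∀ v ∈ Q, ∀ u ∈ C, G.Adj v u) :
    IsSplitPartition G (C ∪ Q) I :=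
  ⟨Set.disjoint_union_left.2 ⟨hCI, hIQ.symm⟩, by rwa [Set.union_right_comm],
    Set.pairwise_union.2 ⟨hC, hQ.pairwise _, fun u hu v hv _ =>
      ⟨(hQC v hv u hu).symm, hQC v hv u hu⟩⟩, hI⟩

theorem isSplitPartition_union_right {Q : Set V} (hCI : Disjoint C I) (hCQ : Disjoint C Q)
    (hcover : C ∪ I ∪ Q = Set.univ) (hC : G.IsClique C) (hI : IsIndep G I)
    (hQ : Q.Subsingleton) (hQI : ∀ v ∈ Q, ∀ u ∈ I, ¬ G.Adj v u) :
    IsSplitPartition G C (I ∪ Q) :=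
  ⟨Set.disjoint_union_right.2 ⟨hCI, hCQ⟩, by rwa [← Set.union_assoc],
    hC, Set.pairwise_union.2 ⟨hI, hQ.pairwise _, fun u hu v hv _ =>
      ⟨fun huv => hQI v hv u hu huv.symm, hQI v hv u hu⟩⟩⟩

variable {Chat Ihat : Set V}

theorem subset_left_of_isSplitPartition (hCI : Disjoint Chat Ihat) (hC : G.IsClique Chat)
    (hCadj : ∀ v ∈ Chat, ∃ u ∈ Ihat, G.Adj v u)
    (hInadj : ∀ v ∈ Ihat, ∃ u ∈ Chat, ¬ G.Adj v u)
    (h : IsSplitPartition G C I) : Chat ⊆ C := by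
  intro v hv
  by_contra hvC
  have hvI : v ∈ I := (h.mem_or_mem_s17 v).resolve_left hvC
  obtain ⟨u, huIhat, hvu⟩ := hCadj v hv
  obtain ⟨w, hwChat, hwu⟩ := hInadj u huIhat
  have huC : u ∈ C := h.mem_left_of_adj hvI hvu
  have hwv : w ≠ v := by rintro rfl; exact hwu hvu.symm
  have hwC : w ∈ C := h.mem_left_of_adj hvI (hC hv hwChat hwv.symm)
  have huI : u ∈ I := h.mem_right_of_not_adj hwC (hCI.ne_of_mem hwChat huIhat)
    fun hwu' => hwu hwu'.symm
  exact h.notMem_left huI huC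

theorem subset_right_of_isSplitPartition (hCI : Disjoint Chat Ihat) (hI : IsIndep G Ihat)
    (hCadj : ∀ v ∈ Chat, ∃ u ∈ Ihat, G.Adj v u)
    (hInadj : ∀ v ∈ Ihat, ∃ u ∈ Chat, ¬ G.Adj v u)
    (h : IsSplitPartition G C I) : Ihat ⊆ I := by
  intro v hv
  by_contra hvI
  have hvC : v ∈ C := (h.mem_or_mem_s17 v).resolve_right hvI
  obtain ⟨u, huChat, hvu⟩ := hInadj v hv
  obtain ⟨w, hwIhat, huw⟩ := hCadj u huChat
  have huI : u ∈ I := h.mem_right_of_not_adj hvC (hCI.ne_of_mem huChat hv).symm hvu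
  have hwC : w ∈ C := h.mem_left_of_adj huI huw
  have hvw : v ≠ w := by rintro rfl; exact hvu huw.symm
  have hwI : w ∈ I := h.mem_right_of_not_adj hvC hvw (hI hv hwIhat hvw)
  exact h.notMem_left hwI hwC

theorem alwaysClique_eq_of_subset_left {S T : Set V} (hST : IsSplitPartition G S T)
    (hS : ∀ C I, IsSplitPartition G C I → S ⊆ C) : alwaysClique G = S :=
  Set.Subset.antisymm (fun _ hv => hv S T hST) fun _ hv C I h => hS C I h hv

theorem alwaysIndep_eq_of_subset_right {S T : Set V} (hST : IsSplitPartition G S T)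
    (hT : ∀ C I, IsSplitPartition G C I → T ⊆ I) : alwaysIndep G = T :=
  Set.Subset.antisymm (fun _ hv => hv S T hST) fun _ hv C I h => hT C I h hv

theorem questioning_eq_compl_union : questioning G = (alwaysClique G ∪ alwaysIndep G)ᶜ := by
  ext v
  simp only [questioning, alwaysClique, alwaysIndep, Set.mem_compl_iff, Set.mem_union,
    Set.mem_ofPred_eq, not_or, not_forall]
  constructor
  · rintro ⟨⟨C, I, h, hvC⟩, ⟨C', I', h', hvI'⟩⟩
    exact ⟨⟨C', I', h', h'.notMem_left hvI'⟩,
      ⟨C, I, h, fun hvI => h.notMem_left hvI hvC⟩⟩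
  · rintro ⟨⟨C', I', h', hvC'⟩, ⟨C, I, h, hvI⟩⟩
    exact ⟨⟨C, I, h, (h.mem_or_mem_s17 v).resolve_right hvI⟩,
      ⟨C', I', h', (h'.mem_or_mem_s17 v).resolve_left hvC'⟩⟩

end

/-- Suppose `{Ĉ, Î, Q̂}` is a partition of `V(G)` (parts may be empty)
such that: (1) `Ĉ` is a clique and `Î` is an independent set; (2) `|Q̂| ≤ 1`; (3) every
vertex of `Q̂` is adjacent to every vertex of `Ĉ` and non-adjacent to every vertex of `Î`;
(4) every vertex of `Ĉ` has a neighbor in `Î` and every vertex of `Î` has a non-neighbor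
in `Ĉ`. Then `G` is a split graph with always-clique set `Ĉ`, always-independent set `Î`,
and questioning set `Q̂`. -/
theorem split_partition_characterization_small_Q {V : Type*} [Fintype V] (G : SimpleGraph V)
    (Chat Ihat Qhat : Set V)
    (hdisjCI : Disjoint Chat Ihat) (hdisjCQ : Disjoint Chat Qhat)
    (hdisjIQ : Disjoint Ihat Qhat) (hcover : Chat ∪ Ihat ∪ Qhat = Set.univ)
    (h1C : G.IsClique Chat) (h1I : IsIndep G Ihat)
    (h2 : Qhat.ncard ≤ 1)
    (h3 : ∀ v ∈ Qhat, (∀ u ∈ Chat, G.Adj v u) ∧ (∀ u ∈ Ihat, ¬ G.Adj v u))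
    (h4 : (∀ v ∈ Chat, ∃ u ∈ Ihat, G.Adj v u) ∧ (∀ v ∈ Ihat, ∃ u ∈ Chat, ¬ G.Adj v u)) :
    IsSplit G ∧ alwaysClique G = Chat ∧ alwaysIndep G = Ihat ∧ questioning G = Qhat := by
  have hQ : Qhat.Subsingleton := Set.ncard_le_one_iff_subsingleton.1 h2
  have hleft := isSplitPartition_union_left hdisjCI hdisjIQ hcover h1C h1I hQ
    fun v hv => (h3 v hv).1
  have hright := isSplitPartition_union_right hdisjCI hdisjCQ hcover h1C h1I hQ
    fun v hv => (h3 v hv).2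
  have hClique : alwaysClique G = Chat := alwaysClique_eq_of_subset_left hright
    fun _ _ => subset_left_of_isSplitPartition hdisjCI h1C h4.1 h4.2
  have hIndep : alwaysIndep G = Ihat := alwaysIndep_eq_of_subset_right hleft
    fun _ _ => subset_right_of_isSplitPartition hdisjCI h1I h4.1 h4.2
  have hQcompl : (Chat ∪ Ihat)ᶜ = Qhat :=
    IsCompl.compl_eq ⟨Set.disjoint_union_left.2 ⟨hdisjCQ, hdisjIQ⟩, codisjoint_iff.2 hcover⟩
  refine ⟨⟨_, _, hleft⟩, hClique, hIndep, ?_⟩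
  rw [questioning_eq_compl_union, hClique, hIndep, hQcompl]
end

section
/- Let n and q be natural numbers with 2 ≤ q < n, and let ε be a real number with 0 < ε < 1. Let t₁ = ⌊(n−q)/2⌋ − ⌈log₂(1/ε)⌉ − 2 and t₂ = ⌈(n−q)/2⌉ + ⌈log₂(1/ε)⌉ + 2 (as integers). Then ∑_{c = max{0, t₁}}^{min{t₂, n−q}} C(n−q, c) · (2^{n−c−q} − 1)^c ≥ (1 − ε) · ∑_{c = 0}^{n−q} C(n−q, c) · (2^{n−c−q} − 1)^c, where C(·,·) denotes the binomial coefficient. -/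
/-!
With `m = n - q`, `M = m / 2` and `a c = C(m, c) (2^(m-c) - 1)^c`, comparing consecutive terms gives
`a (c+1) / a c ≤ 2^(m-2c-1)` above the middle and `≥ 2^(m-2c-3)` below it, so the ratio loses a
factor `4` with every step away from `M`. Multiplying the ratios, `a c ≤ 2^j 4^(-C(j,2)) a M` where
`j = |c - M|`, which is at most `2^(1-j) a M` once `j ≥ 3`. Summing these geometric bounds on both
sides, the terms with `j > k + 2` contribute at most `2^(-k) a M ≤ ε a M`, where `k = ⌈log₂(1/ε)⌉`.
-/

open Finset

def summand (m c : ℕ) : ℝ := m.choose c * (2 ^ (m - c) - 1) ^ c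

lemma summand_nonneg (m c : ℕ) : 0 ≤ summand m c :=
  mul_nonneg (Nat.cast_nonneg _) (pow_nonneg (sub_nonneg.2 (one_le_pow₀ one_le_two)) _)

lemma summand_eq_of_eq_add {m c b : ℕ} (h : m = c + b + 1) :
    summand m c = m.choose c * (2 * 2 ^ b - 1) ^ c ∧
      summand m (c + 1) = m.choose (c + 1) * (2 ^ b - 1) ^ (c + 1) := by
  refine ⟨?_, ?_⟩ <;> rw [summand]
  · rw [show m - c = b + 1 by omega, pow_succ']
  · rw [show m - (c + 1) = b by omega]

lemma Nat.choose_succ_le_choose {n k : ℕ} (h : n ≤ 2 * k + 1) : n.choose (k + 1) ≤ n.choose k :=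
  Nat.le_of_mul_le_mul_right
    (by rw [Nat.choose_succ_right_eq]; exact Nat.mul_le_mul_left _ (by omega)) k.succ_pos

lemma two_mul_add_one_pow_le {x : ℝ} {c : ℕ} (hx : 0 < x) (hc : (c : ℝ) ≤ x) :
    (2 * x + 1) ^ c ≤ 2 * (2 * x) ^ c := by
  suffices h : ∀ i ≤ c, (2 * x + 1) ^ i * x ≤ (2 * x) ^ i * (x + i) by
    nlinarith [h c le_rfl, pow_pos (by positivity : 0 < 2 * x) c]
  intro i hi
  induction i with
  | zero => simp
  | succ i ih =>
    have hix : (i : ℝ) + 1 ≤ x := by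
      have := (Nat.cast_le (α := ℝ)).2 hi; push_cast at this; linarith
    have hpow : 0 ≤ (2 * x) ^ i := by positivity
    calc (2 * x + 1) ^ (i + 1) * x = (2 * x + 1) ^ i * x * (2 * x + 1) := by ring
      _ ≤ (2 * x) ^ i * (x + i) * (2 * x + 1) :=
        mul_le_mul_of_nonneg_right (ih (by omega)) (by positivity)
      _ ≤ (2 * x) ^ (i + 1) * (x + ↑(i + 1)) := by
        push_cast
        rw [pow_succ]
        nlinarith [mul_nonneg hpow (by linarith : (0 : ℝ) ≤ x - i)]

lemma summand_succ_mul_le {m c : ℕ} (h : m ≤ 2 * c + 1) :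
    summand m (c + 1) * 2 ^ (2 * c + 1) ≤ summand m c * 2 ^ m := by
  rcases le_or_gt m c with hmc | hcm
  · rw [summand, Nat.choose_eq_zero_of_lt (by omega)]
    simpa using mul_nonneg (summand_nonneg m c) (pow_nonneg zero_le_two m)
  obtain ⟨b, rfl⟩ : ∃ b, m = c + b + 1 := ⟨m - c - 1, by omega⟩
  obtain ⟨h0, h1⟩ := summand_eq_of_eq_add (rfl : c + b + 1 = c + b + 1)
  obtain ⟨x, hx, hb⟩ : ∃ x : ℝ, 0 ≤ x ∧ (2 : ℝ) ^ b = x + 1 :=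
    ⟨2 ^ b - 1, sub_nonneg.2 (one_le_pow₀ one_le_two), by ring⟩
  calc summand (c + b + 1) (c + 1) * 2 ^ (2 * c + 1)
      = (c + b + 1).choose (c + 1) * ((2 * x) ^ c * 2 ^ c * (2 * x)) := by rw [h1, hb]; ring
    _ ≤ (c + b + 1).choose c * ((2 * x + 1) ^ c * 2 ^ c * (2 * x + 2)) := by
      gcongr
      · exact Nat.choose_succ_le_choose h
      · linarith
      · linarith
    _ = summand (c + b + 1) c * 2 ^ (c + b + 1) := by rw [h0, pow_add, pow_add, hb]; ring

lemma summand_mul_le {m c : ℕ} (h : 2 * c + 2 ≤ m) :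
    summand m c * 2 ^ m ≤ summand m (c + 1) * 2 ^ (2 * c + 3) := by
  obtain ⟨b, rfl⟩ : ∃ b, m = c + b + 1 := ⟨m - c - 1, by omega⟩
  obtain ⟨h0, h1⟩ := summand_eq_of_eq_add (rfl : c + b + 1 = c + b + 1)
  have hcb : (c : ℝ) + 2 ≤ 2 ^ b := by
    exact_mod_cast (Nat.lt_two_pow_self (n := c + 1)).trans_le
      (Nat.pow_le_pow_right two_pos (by omega))
  obtain ⟨x, hx, hb⟩ : ∃ x : ℝ, (c : ℝ) + 1 ≤ x ∧ (2 : ℝ) ^ b = x + 1 :=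
    ⟨2 ^ b - 1, by linarith, by ring⟩
  have hx0 : 0 < x := by linarith [c.cast_nonneg (α := ℝ)]
  calc summand (c + b + 1) c * 2 ^ (c + b + 1)
      = (c + b + 1).choose c * ((2 * x + 1) ^ c * 2 ^ c * (2 * x + 2)) := by
        rw [h0, pow_add, pow_add, hb]; ring
    _ ≤ (c + b + 1).choose (c + 1) * ((2 * (2 * x) ^ c) * 2 ^ c * (4 * x)) := by
      gcongr
      · exact Nat.choose_le_succ_of_lt_half_left (by omega)
      · exact two_mul_add_one_pow_le hx0 (by linarith)
      · linarith
    _ = summand (c + b + 1) (c + 1) * 2 ^ (2 * c + 3) := by rw [h1, hb]; ring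

lemma two_pow_two_mul_add (i e : ℕ) : (2 : ℝ) ^ (2 * i + e) = 4 ^ i * 2 ^ e := by
  rw [pow_add, pow_mul]; norm_num

lemma mul_four_pow_choose_two_le_pow_mul {g : ℕ → ℝ} {C : ℝ} {J : ℕ} (hC : 0 ≤ C)
    (h : ∀ i < J, g (i + 1) * 4 ^ i ≤ C * g i) :
    ∀ j ≤ J, g j * 4 ^ j.choose 2 ≤ C ^ j * g 0 := by
  intro j hj
  induction j with
  | zero => simp
  | succ j ih =>
    calc g (j + 1) * 4 ^ (j + 1).choose 2 = g (j + 1) * 4 ^ j * 4 ^ j.choose 2 := by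
          rw [Nat.choose_succ_succ', Nat.choose_one_right, pow_add, mul_assoc]
      _ ≤ C * g j * 4 ^ j.choose 2 := mul_le_mul_of_nonneg_right (h j hj) (by positivity)
      _ ≤ C * (C ^ j * g 0) := by
        rw [mul_assoc]; exact mul_le_mul_of_nonneg_left (ih (by omega)) hC
      _ = C ^ (j + 1) * g 0 := by ring

lemma summand_add_mul_four_pow_choose_two_le (m j : ℕ) :
    summand m (m / 2 + j) * 4 ^ j.choose 2 ≤ summand m (m / 2) := by
  have step : ∀ i < j, summand m (m / 2 + (i + 1)) * 4 ^ i ≤ 1 * summand m (m / 2 + i) := by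
    intro i _
    have hR := summand_succ_mul_le (m := m) (c := m / 2 + i) (by omega)
    have hpow : (2 : ℝ) ^ m ≤ 2 ^ (2 * (m / 2) + 1) := pow_le_pow_right₀ one_le_two (by omega)
    refine le_of_mul_le_mul_right ?_ (by positivity : (0 : ℝ) < 2 ^ (2 * (m / 2) + 1))
    calc summand m (m / 2 + (i + 1)) * 4 ^ i * 2 ^ (2 * (m / 2) + 1)
        = summand m (m / 2 + i + 1) * 2 ^ (2 * (m / 2 + i) + 1) := by
          rw [show 2 * (m / 2 + i) + 1 = 2 * i + (2 * (m / 2) + 1) by ring,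
            two_pow_two_mul_add i, ← add_assoc, mul_assoc]
      _ ≤ summand m (m / 2 + i) * 2 ^ m := hR
      _ ≤ 1 * summand m (m / 2 + i) * 2 ^ (2 * (m / 2) + 1) := by
          rw [one_mul]; gcongr; exact summand_nonneg _ _
  simpa using mul_four_pow_choose_two_le_pow_mul (g := fun i ↦ summand m (m / 2 + i))
    zero_le_one step j le_rfl

lemma summand_sub_mul_four_pow_choose_two_le {m j : ℕ} (hj : j ≤ m / 2) :
    summand m (m / 2 - j) * 4 ^ j.choose 2 ≤ 2 ^ j * summand m (m / 2) := by
  have step : ∀ i < m / 2, summand m (m / 2 - (i + 1)) * 4 ^ i ≤ 2 * summand m (m / 2 - i) := by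
    intro i hi
    obtain ⟨c, hc⟩ : ∃ c, m / 2 = c + i + 1 := ⟨m / 2 - i - 1, by omega⟩
    have hR := summand_mul_le (m := m) (c := c) (by omega)
    have hpow : (2 : ℝ) ^ (2 * (m / 2)) ≤ 2 ^ m := pow_le_pow_right₀ one_le_two (by omega)
    refine le_of_mul_le_mul_right ?_ (by positivity : (0 : ℝ) < 2 ^ (2 * c + 2))
    rw [show m / 2 - (i + 1) = c by omega, show m / 2 - i = c + 1 by omega]
    calc summand m c * 4 ^ i * 2 ^ (2 * c + 2) = summand m c * 2 ^ (2 * (m / 2)) := by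
          rw [hc, show 2 * (c + i + 1) = 2 * i + (2 * c + 2) by ring, two_pow_two_mul_add i,
            mul_assoc]
      _ ≤ summand m c * 2 ^ m := by gcongr; exact summand_nonneg _ _
      _ ≤ summand m (c + 1) * 2 ^ (2 * c + 3) := hR
      _ = 2 * summand m (c + 1) * 2 ^ (2 * c + 2) := by ring
  simpa using mul_four_pow_choose_two_le_pow_mul (g := fun i ↦ summand m (m / 2 - i))
    zero_le_two step j hj

lemma summand_mul_four_pow_choose_two_dist_le (m c : ℕ) :
    summand m c * 4 ^ (c.dist (m / 2)).choose 2 ≤ 2 ^ c.dist (m / 2) * summand m (m / 2) := by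
  rcases le_total (m / 2) c with h | h
  · obtain ⟨j, rfl⟩ := Nat.exists_eq_add_of_le h
    rw [show (m / 2 + j).dist (m / 2) = j by unfold Nat.dist; omega]
    exact (summand_add_mul_four_pow_choose_two_le m j).trans
      (le_mul_of_one_le_left (summand_nonneg _ _) (one_le_pow₀ one_le_two))
  · obtain ⟨j, hj, rfl⟩ : ∃ j ≤ m / 2, c = m / 2 - j := ⟨m / 2 - c, by omega, by omega⟩
    rw [show (m / 2 - j).dist (m / 2) = j by unfold Nat.dist; omega]
    exact summand_sub_mul_four_pow_choose_two_le hj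

lemma two_pow_mul_two_pow_pred_le_four_pow_choose_two {j : ℕ} (hj : 3 ≤ j) :
    2 ^ j * 2 ^ (j - 1) ≤ 4 ^ j.choose 2 := by
  rw [← pow_add, show 4 = 2 ^ 2 from rfl, ← pow_mul]
  refine Nat.pow_le_pow_right two_pos ?_
  rw [Nat.choose_two_right, Nat.mul_div_cancel' (even_iff_two_dvd.mp (Nat.even_mul_pred_self j))]
  obtain ⟨i, rfl⟩ : ∃ i, j = i + 3 := ⟨j - 3, by omega⟩
  rw [show i + 3 - 1 = i + 2 by omega]
  nlinarith

lemma summand_le_half_pow_dist {m c : ℕ} (h : 3 ≤ c.dist (m / 2)) :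
    summand m c ≤ summand m (m / 2) * (1 / 2) ^ (c.dist (m / 2) - 1) := by
  set j := c.dist (m / 2)
  have hj : (2 : ℝ) ^ j * 2 ^ (j - 1) ≤ 4 ^ j.choose 2 := by
    exact_mod_cast two_pow_mul_two_pow_pred_le_four_pow_choose_two h
  rw [one_div_pow, mul_one_div, le_div_iff₀ (by positivity)]
  refine le_of_mul_le_mul_left ?_ (by positivity : (0 : ℝ) < 2 ^ j)
  calc 2 ^ j * (summand m c * 2 ^ (j - 1)) = summand m c * (2 ^ j * 2 ^ (j - 1)) := by ring
    _ ≤ summand m c * 4 ^ j.choose 2 := mul_le_mul_of_nonneg_left hj (summand_nonneg m c)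
    _ ≤ 2 ^ j * summand m (m / 2) := summand_mul_four_pow_choose_two_dist_le m c

lemma sum_half_pow_dist_le (N M r : ℕ) :
    ∑ c ∈ range N with r < c.dist M, (1 / 2 : ℝ) ^ (c.dist M - 1) ≤ 4 * (1 / 2) ^ r := by
  have hside : ∀ (t : Finset ℕ) (n : ℕ) (φ : ℕ → ℕ), (∀ i < n, (φ i).dist M - 1 = r + i) →
      t ⊆ (range n).image φ → ∑ c ∈ t, (1 / 2 : ℝ) ^ (c.dist M - 1) ≤ 2 * (1 / 2) ^ r := by
    intro t n φ hφ ht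
    calc ∑ c ∈ t, (1 / 2 : ℝ) ^ (c.dist M - 1)
        ≤ ∑ c ∈ (range n).image φ, (1 / 2 : ℝ) ^ (c.dist M - 1) :=
          sum_le_sum_of_subset_of_nonneg ht fun _ _ _ ↦ by positivity
      _ ≤ ∑ i ∈ range n, (1 / 2 : ℝ) ^ ((φ i).dist M - 1) :=
          sum_image_le_of_nonneg fun _ _ ↦ by positivity
      _ = (1 / 2) ^ r * ∑ i ∈ range n, (1 / 2 : ℝ) ^ i := by
          rw [mul_sum]
          exact sum_congr rfl fun i hi ↦ by rw [hφ i (mem_range.1 hi), pow_add]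
      _ ≤ 2 * (1 / 2) ^ r := by
          rw [mul_comm]
          exact mul_le_mul_of_nonneg_right (sum_geometric_two_le n) (by positivity)
  rw [← sum_filter_add_sum_filter_not _ (· < M),
    show (4 : ℝ) * (1 / 2) ^ r = 2 * (1 / 2) ^ r + 2 * (1 / 2) ^ r by ring]
  refine add_le_add (hside _ (M - r) (fun i ↦ M - r - 1 - i) ?_ ?_)
    (hside _ N (fun i ↦ M + r + 1 + i) ?_ ?_)
  · intro i hi; unfold Nat.dist; omega
  · intro c hc
    simp only [mem_filter, mem_range] at hc; unfold Nat.dist at hc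
    exact mem_image.2 ⟨M - r - 1 - c, mem_range.2 (by omega), by omega⟩
  · intro i hi; unfold Nat.dist; omega
  · intro c hc
    simp only [mem_filter, mem_range] at hc; unfold Nat.dist at hc
    exact mem_image.2 ⟨c - (M + r + 1), mem_range.2 (by omega), by omega⟩

theorem one_sub_mul_sum_summand_le_sum_near_middle {m k : ℕ} {ε : ℝ} (hε : (1 / 2) ^ k ≤ ε) :
    (1 - ε) * ∑ c ∈ range (m + 1), summand m c ≤
      ∑ c ∈ range (m + 1) with c.dist (m / 2) ≤ k + 2, summand m c := by
  have htail : ∑ c ∈ range (m + 1) with ¬c.dist (m / 2) ≤ k + 2, summand m c ≤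
      ε * summand m (m / 2) :=
    calc ∑ c ∈ range (m + 1) with ¬c.dist (m / 2) ≤ k + 2, summand m c
        ≤ ∑ c ∈ range (m + 1) with k + 2 < c.dist (m / 2),
            summand m (m / 2) * (1 / 2) ^ (c.dist (m / 2) - 1) := by
          simp only [not_le]
          exact sum_le_sum fun c hc ↦ summand_le_half_pow_dist (by rw [mem_filter] at hc; omega)
      _ ≤ summand m (m / 2) * (4 * (1 / 2) ^ (k + 2)) := by
          rw [← mul_sum]
          exact mul_le_mul_of_nonneg_left (sum_half_pow_dist_le _ _ _) (summand_nonneg _ _)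
      _ = (1 / 2) ^ k * summand m (m / 2) := by ring
      _ ≤ ε * summand m (m / 2) := mul_le_mul_of_nonneg_right hε (summand_nonneg _ _)
  have hmiddle : summand m (m / 2) ≤ ∑ c ∈ range (m + 1), summand m c :=
    single_le_sum (fun c _ ↦ summand_nonneg m c) (mem_range.2 (by omega))
  have hε0 : 0 ≤ ε := (by positivity : (0 : ℝ) ≤ (1 / 2) ^ k).trans hε
  rw [← sum_filter_add_sum_filter_not (range (m + 1)) (fun c ↦ c.dist (m / 2) ≤ k + 2)]
    at hmiddle ⊢
  linarith [mul_le_mul_of_nonneg_left hmiddle hε0]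

lemma half_pow_toNat_ceil_logb_le {ε : ℝ} (hε : 0 < ε) :
    (1 / 2 : ℝ) ^ ⌈Real.logb 2 (1 / ε)⌉.toNat ≤ ε := by
  have hlog : Real.logb 2 (1 / ε) ≤ (⌈Real.logb 2 (1 / ε)⌉.toNat : ℕ) :=
    (Int.le_ceil _).trans (by exact_mod_cast Int.self_le_toNat _)
  rw [Real.logb_le_iff_le_rpow one_lt_two (by positivity), Real.rpow_natCast] at hlog
  rw [one_div_pow, div_le_iff₀ (by positivity)]
  rwa [div_le_iff₀ hε, mul_comm] at hlog

theorem middle_terms_dominate_general (n q : ℕ)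
    (ε : ℝ) (hε0 : 0 < ε) (hε1 : ε < 1) :
    (1 - ε) * ∑ c ∈ Finset.range (n - q + 1),
        (Nat.choose (n - q) c : ℝ) * ((2 : ℝ) ^ (n - c - q) - 1) ^ c ≤
      ∑ c ∈ Finset.Icc
          (Int.toNat ((((n - q) / 2 : ℕ) : ℤ) - ⌈Real.logb 2 (1 / ε)⌉ - 2))
          (min (Int.toNat ((((n - q + 1) / 2 : ℕ) : ℤ) + ⌈Real.logb 2 (1 / ε)⌉ + 2)) (n - q)),
        (Nat.choose (n - q) c : ℝ) * ((2 : ℝ) ^ (n - c - q) - 1) ^ c := by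
  have hsummand : ∀ c, (Nat.choose (n - q) c : ℝ) * ((2 : ℝ) ^ (n - c - q) - 1) ^ c =
      summand (n - q) c := fun c ↦ by rw [summand, Nat.sub_right_comm]
  simp only [hsummand]
  have hK : 0 ≤ ⌈Real.logb 2 (1 / ε)⌉ :=
    Int.ceil_nonneg (Real.logb_nonneg one_lt_two (one_le_one_div hε0 hε1.le))
  refine (one_sub_mul_sum_summand_le_sum_near_middle (half_pow_toNat_ceil_logb_le hε0)).trans
    (sum_le_sum_of_subset_of_nonneg (fun c hc ↦ ?_) fun c _ _ ↦ summand_nonneg _ c)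
  simp only [mem_filter, mem_range] at hc
  unfold Nat.dist at hc
  rw [mem_Icc]
  omega

/-- Let `2 ≤ q < n` and `0 < ε < 1`. With
`t₁ = ⌊(n−q)/2⌋ − ⌈log₂(1/ε)⌉ − 2` and `t₂ = ⌈(n−q)/2⌉ + ⌈log₂(1/ε)⌉ + 2` (as integers),
the partial sum of `C(n−q,c)·(2^{n−c−q} − 1)^c` over `c` from `max{0,t₁}` to `min{t₂,n−q}`
is at least `(1 − ε)` times the full sum over `c` from `0` to `n−q`. -/
theorem middle_terms_dominate (n q : ℕ) (hq : 2 ≤ q) (hqn : q < n)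
    (ε : ℝ) (hε0 : 0 < ε) (hε1 : ε < 1) :
    (1 - ε) * ∑ c ∈ Finset.range (n - q + 1),
        (Nat.choose (n - q) c : ℝ) * ((2 : ℝ) ^ (n - c - q) - 1) ^ c ≤
      ∑ c ∈ Finset.Icc
          (Int.toNat ((((n - q) / 2 : ℕ) : ℤ) - ⌈Real.logb 2 (1 / ε)⌉ - 2))
          (min (Int.toNat ((((n - q + 1) / 2 : ℕ) : ℤ) + ⌈Real.logb 2 (1 / ε)⌉ + 2)) (n - q)),
        (Nat.choose (n - q) c : ℝ) * ((2 : ℝ) ^ (n - c - q) - 1) ^ c :=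
  middle_terms_dominate_general n q ε hε0 hε1
end
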